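/- Define the star height |·|_* : StExp → ℕ by |0|_* = 0, |a|_* = 0 for a ∈ Act, |r + s|_* = max(|r|_*, |s|_*), |r·s|_* = max(|r|_*, |s|_*), and |r*s|_* = max(|r|_* + 1, |s|_*). Then: (A) |r|_* < |r*s|_* for all r, s ∈ StExp; and (B) if r → s in the syntactic chart (StExp, δ), then |s|_* ≤ |r|_*. Consequently, if r →+ r' then |r'|_* < |(r*s)|_* whenever r is the loop body, i.e., if r*s →+ r' via the loop body then the star height strictly drops below |r*s|_*. -/

import Mathlib

/-- A chart over action alphabet `Act` with state space `X`: each state is assigned a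
finite set of transitions, either `(a, none)` (i.e. `x →a ✓`) or `(a, some y)` (i.e. `x →a y`). -/
structure Chart (Act X : Type) where
  tr : X → Finset (Act × Option X)

/-- `x →a ✓` in the chart `C`. -/
def Chart.Halts {Act X : Type} (C : Chart Act X) (x : X) : Prop :=
  ∃ a : Act, (a, (none : Option X)) ∈ C.tr x

/-- `x → y` (for some action) in the chart `C`. -/
def Chart.StepRel {Act X : Type} (C : Chart Act X) (x y : X) : Prop :=
  ∃ a : Act, (a, some y) ∈ C.tr x

/-- `R` is a bisimulation between the charts `C` and `D`. -/
def IsBisim {Act X Y : Type} (C : Chart Act X) (D : Chart Act Y) (R : X → Y → Prop) : Prop :=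
  ∀ x y, R x y → ∀ a : Act,
    (((a, (none : Option X)) ∈ C.tr x) ↔ ((a, (none : Option Y)) ∈ D.tr y)) ∧
    (∀ x', (a, some x') ∈ C.tr x → ∃ y', (a, some y') ∈ D.tr y ∧ R x' y') ∧
    (∀ y', (a, some y') ∈ D.tr y → ∃ x', (a, some x') ∈ C.tr x ∧ R x' y')

/-- States `x` of `C` and `y` of `D` are bisimilar. -/
def Bisimilar {Act X Y : Type} (C : Chart Act X) (D : Chart Act Y) (x : X) (y : Y) : Prop :=
  ∃ R, IsBisim C D R ∧ R x y

/-- A chart homomorphism is a function whose graph is a bisimulation. -/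
def IsChartHom {Act X Y : Type} (C : Chart Act X) (D : Chart Act Y) (h : X → Y) : Prop :=
  IsBisim C D (fun x y => h x = y)

/-- 1-free star expressions over the alphabet `Act`. -/
inductive StExp (Act : Type) : Type where
  | zero : StExp Act
  | act : Act → StExp Act
  | add : StExp Act → StExp Act → StExp Act
  | mul : StExp Act → StExp Act → StExp Act
  | star : StExp Act → StExp Act → StExp Act
deriving DecidableEq

/-- Continuation after a transition of the left operand: `✓` continues as `s`,
and a state `t` continues as `t·s`. -/
def StExp.seqAfter {Act : Type} (s : StExp Act) : Option (StExp Act) → StExp Act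
  | none => s
  | some t => t.mul s

/-- The transition function of the syntactic chart, following Antimirov-style rules. -/
def StExp.tr {Act : Type} [DecidableEq Act] : StExp Act → Finset (Act × Option (StExp Act))
  | .zero => ∅
  | .act a => {(a, none)}
  | .add r s => r.tr ∪ s.tr
  | .mul r s => r.tr.image (fun p => (p.1, some (StExp.seqAfter s p.2)))
  | .star r s =>
      (r.tr.image (fun p => (p.1, some (StExp.seqAfter (StExp.star r s) p.2)))) ∪ s.tr

/-- The syntactic chart `(StExp, δ)`. -/
def synChart (Act : Type) [DecidableEq Act] : Chart Act (StExp Act) := ⟨StExp.tr⟩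

/-- Star height of a 1-free star expression. -/
def StExp.sh {Act : Type} : StExp Act → ℕ
  | .zero => 0
  | .act _ => 0
  | .add r s => max r.sh s.sh
  | .mul r s => max r.sh s.sh
  | .star r s => max (r.sh + 1) s.sh

/-! Every transition of the syntactic chart either discards context or unfolds a star `r*s` into
`r'·(r*s)` with `r'` a derivative of `r`, so star height never increases; and a loop body `r`
sits one level below `r*s`. -/

namespace StExp

variable {Act : Type}

theorem sh_lt_sh_star (r s : StExp Act) : r.sh < (r.star s).sh :=
  Nat.lt_of_lt_of_le (Nat.lt_succ_self r.sh) (le_max_left _ _)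

theorem sh_seqAfter_le [DecidableEq Act] {r s : StExp Act} {a : Act} {o : Option (StExp Act)}
    (hr : ∀ t, (a, some t) ∈ r.tr → t.sh ≤ r.sh) (ho : (a, o) ∈ r.tr) :
    (s.seqAfter o).sh ≤ max r.sh s.sh := by
  cases o with
  | none => exact le_max_right _ _
  | some t => exact max_le_max_right _ (hr t ho)

theorem sh_le_of_mem_tr [DecidableEq Act] {r t : StExp Act} {a : Act} (h : (a, some t) ∈ r.tr) :
    t.sh ≤ r.sh := by
  induction r generalizing a t with
  | zero => simp [tr] at h
  | act b => simp [tr] at h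
  | add r s ihr ihs =>
    rcases Finset.mem_union.mp h with h | h
    · exact (ihr h).trans (le_max_left _ _)
    · exact (ihs h).trans (le_max_right _ _)
  | mul r s ihr _ =>
    obtain ⟨⟨b, o⟩, ho, -, rfl⟩ := by
      simpa only [tr, Finset.mem_image, Prod.mk.injEq, Option.some.injEq] using h
    exact sh_seqAfter_le (fun _ => ihr) ho
  | star r s ihr ihs =>
    rcases Finset.mem_union.mp h with h | h
    · obtain ⟨⟨b, o⟩, ho, -, rfl⟩ := by
        simpa only [Finset.mem_image, Prod.mk.injEq, Option.some.injEq] using h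
      calc _ ≤ max r.sh (r.star s).sh := sh_seqAfter_le (fun _ => ihr) ho
        _ = (r.star s).sh := max_eq_right (sh_lt_sh_star r s).le
    · exact (ihs h).trans (le_max_right _ _)

theorem sh_le_of_stepRel [DecidableEq Act] {r t : StExp Act} (h : (synChart Act).StepRel r t) :
    t.sh ≤ r.sh :=
  sh_le_of_mem_tr h.choose_spec

theorem sh_le_of_transGen [DecidableEq Act] {r t : StExp Act}
    (h : Relation.TransGen (synChart Act).StepRel r t) : t.sh ≤ r.sh := by
  induction h with
  | single h => exact sh_le_of_stepRel h
  | tail _ h ih => exact (sh_le_of_stepRel h).trans ih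

end StExp

/-- (A) `|r|_* < |r*s|_*`; (B) transitions of the syntactic chart do not increase star
height; consequently (C) if `r →+ r'` then `|r'|_* < |r*s|_*`. -/
theorem star_height_facts {Act : Type} [DecidableEq Act] :
    (∀ r s : StExp Act, r.sh < (r.star s).sh) ∧
    (∀ r s : StExp Act, (synChart Act).StepRel r s → s.sh ≤ r.sh) ∧
    (∀ r r' s : StExp Act, Relation.TransGen ((synChart Act).StepRel) r r' →
      r'.sh < (r.star s).sh) :=
  ⟨StExp.sh_lt_sh_star, fun _ _ => StExp.sh_le_of_stepRel,
    fun r _ s h => (StExp.sh_le_of_transGen h).trans_lt (r.sh_lt_sh_star s)⟩
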